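/- arXiv:math/0011175 — 2 statements merged into one kernel-verified Lean document; each statement's English description precedes it below -/
import Mathlib

section
/- Let i, j, n be positive integers and define S(i,j) = ∑_{k=1}^{n} C(k+j−2, 2j−2) · C(k+i−2, 2i−2). Then, in ℚ, (j+i−1) · S(i,j) + 2(2j+2i−1) · S(i+1,j) = 2n · (n−i+1)_{2i−1} · (n−j+1)_{2j−1} / ( (2i)! · (2j−2)! ). -/
/-
Write `i = a + 1`, `j = b + 1`. Since `C(m + a, 2a) · (2a)! = (m - a + 1)_{2a} = (m - a + 1)⋯(m + a)`,
which also vanishes for `m < a`, both sides vanish at `n = 0` and it suffices to compare their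
increments from `n` to `n + 1`. Dividing out the common factor `(n - a + 1)_{2a} (n - b + 1)_{2b}`,
this is the cubic identity
`(a+b+1)(a+1)(2a+1) + (2a+2b+3)(n-a)(n+a+1) = (n+1)(n+a+1)(n+b+1) - n(n-a)(n-b)`.
-/

open Finset

/-- Shifted factorial (Pochhammer) `(a)_n = a(a+1)⋯(a+n-1)`. -/
def poch (a : ℚ) (n : ℕ) : ℚ := ∏ k ∈ Finset.range n, (a + k)

/-- `S(i,j) = ∑_{k=1}^{n} C(k+j-2, 2j-2) · C(k+i-2, 2i-2)`. -/
def Ssum (n i j : ℕ) : ℚ :=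
  ∑ k ∈ Finset.Icc 1 n,
    (Nat.choose (k + j - 2) (2 * j - 2) : ℚ) * (Nat.choose (k + i - 2) (2 * i - 2) : ℚ)

lemma poch_succ (x : ℚ) (t : ℕ) : poch x (t + 1) = poch x t * (x + t) :=
  prod_range_succ _ _

lemma poch_succ' (x : ℚ) (t : ℕ) : poch x (t + 1) = x * poch (x + 1) t := by
  rw [poch, prod_range_succ', mul_comm, Nat.cast_zero, add_zero, poch]
  congr 1
  refine prod_congr rfl fun k _ => ?_
  push_cast
  ring

lemma poch_natCast (s t : ℕ) : poch (s : ℚ) t = (s.ascFactorial t : ℚ) := by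
  induction t with
  | zero => simp [poch]
  | succ t ih => rw [poch_succ, ih, Nat.ascFactorial_succ]; push_cast; ring

lemma poch_eq_zero_of_lt (m a : ℕ) (h : m < a) : poch ((m : ℚ) - a + 1) (2 * a) = 0 := by
  refine prod_eq_zero (i := a - (m + 1)) (by simp; omega) ?_
  rw [Nat.cast_sub (by omega)]
  push_cast
  ring

lemma cast_choose_add_mul_factorial (m a : ℕ) :
    (Nat.choose (m + a) (2 * a) : ℚ) * (Nat.factorial (2 * a) : ℚ)
      = poch ((m : ℚ) - a + 1) (2 * a) := by
  rcases lt_or_ge m a with h | h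
  · rw [Nat.choose_eq_zero_of_lt (by omega), poch_eq_zero_of_lt m a h, Nat.cast_zero, zero_mul]
  · obtain ⟨c, rfl⟩ := Nat.exists_eq_add_of_le h
    have hbase : ((a + c : ℕ) : ℚ) - a + 1 = ((c + 1 : ℕ) : ℚ) := by push_cast; ring
    rw [hbase, poch_natCast, Nat.ascFactorial_eq_factorial_mul_choose,
      show a + c + a = c + 2 * a by ring]
    push_cast
    ring

lemma cast_choose_add (m a : ℕ) :
    (Nat.choose (m + a) (2 * a) : ℚ) = poch ((m : ℚ) - a + 1) (2 * a) / (2 * a).factorial := by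
  rw [← cast_choose_add_mul_factorial, mul_div_cancel_right₀ _ (by positivity)]

lemma poch_sub_add_one_two_mul_succ (x : ℚ) (a : ℕ) :
    poch (x - (a + 1 : ℕ) + 1) (2 * (a + 1))
      = (x - a) * poch (x - a + 1) (2 * a) * (x + a + 1) := by
  rw [show 2 * (a + 1) = 2 * a + 1 + 1 by ring, poch_succ, poch_succ',
    show x - (a + 1 : ℕ) + 1 + 1 = x - a + 1 by push_cast; ring]
  push_cast
  ring

lemma Ssum_succ_succ (n a b : ℕ) :
    Ssum n (a + 1) (b + 1)
      = ∑ m ∈ range n, (Nat.choose (m + b) (2 * b) : ℚ) * (Nat.choose (m + a) (2 * a) : ℚ) := by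
  rw [Ssum, ← Ico_add_one_right_eq_Icc, sum_Ico_eq_sum_range, Nat.add_sub_cancel]
  refine sum_congr rfl fun m _ => ?_
  rw [show 1 + m + (b + 1) - 2 = m + b by omega, show 1 + m + (a + 1) - 2 = m + a by omega,
    show 2 * (b + 1) - 2 = 2 * b by omega, show 2 * (a + 1) - 2 = 2 * a by omega]

theorem sum_choose_mul_choose_identity (a b n : ℕ) :
    ((b : ℚ) + a + 1) *
        ∑ m ∈ range n, (Nat.choose (m + b) (2 * b) : ℚ) * (Nat.choose (m + a) (2 * a) : ℚ)
      + 2 * (2 * (b : ℚ) + 2 * a + 3) *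
        ∑ m ∈ range n,
          (Nat.choose (m + b) (2 * b) : ℚ) * (Nat.choose (m + (a + 1)) (2 * (a + 1)) : ℚ)
      = 2 * (n : ℚ) * poch ((n : ℚ) - a) (2 * a + 1) * poch ((n : ℚ) - b) (2 * b + 1) /
          ((2 * (a + 1)).factorial * (2 * b).factorial) := by
  rw [mul_sum, mul_sum, ← sum_add_distrib]
  induction n with
  | zero => simp
  | succ n ih =>
    have hsucc (c : ℕ) : ((n + 1 : ℕ) : ℚ) - c = n - c + 1 := by push_cast; ring
    rw [sum_range_succ, ih, hsucc, hsucc, cast_choose_add, cast_choose_add, cast_choose_add,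
      poch_sub_add_one_two_mul_succ, poch_succ', poch_succ', poch_succ, poch_succ,
      show 2 * (a + 1) = 2 * a + 1 + 1 by ring, Nat.factorial_succ, Nat.factorial_succ]
    have hfa : ((2 * a).factorial : ℚ) ≠ 0 := by positivity
    have hfb : ((2 * b).factorial : ℚ) ≠ 0 := by positivity
    push_cast
    field_simp
    ring

theorem stmt5_general (i j n : ℕ) (hi : 1 ≤ i) (hj : 1 ≤ j) :
    ((j : ℚ) + i - 1) * Ssum n i j + 2 * (2 * (j : ℚ) + 2 * i - 1) * Ssum n (i + 1) j
    = 2 * (n : ℚ) * poch ((n : ℚ) - i + 1) (2 * i - 1) * poch ((n : ℚ) - j + 1) (2 * j - 1) /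
        ((Nat.factorial (2 * i) : ℚ) * (Nat.factorial (2 * j - 2) : ℚ)) := by
  obtain ⟨a, rfl⟩ : ∃ a, i = a + 1 := ⟨i - 1, by omega⟩
  obtain ⟨b, rfl⟩ : ∃ b, j = b + 1 := ⟨j - 1, by omega⟩
  have shift (c : ℕ) : (n : ℚ) - (c + 1 : ℕ) + 1 = n - c := by push_cast; ring
  rw [Ssum_succ_succ, Ssum_succ_succ, shift, shift, show 2 * (a + 1) - 1 = 2 * a + 1 by omega,
    show 2 * (b + 1) - 1 = 2 * b + 1 by omega, show 2 * (b + 1) - 2 = 2 * b by omega]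
  convert sum_choose_mul_choose_identity a b n using 3 <;> push_cast <;> ring

theorem stmt5 (i j n : ℕ) (hi : 1 ≤ i) (hj : 1 ≤ j) (hn : 1 ≤ n) :
    ((j : ℚ) + i - 1) * Ssum n i j + 2 * (2 * (j : ℚ) + 2 * i - 1) * Ssum n (i + 1) j
    = 2 * (n : ℚ) * poch ((n : ℚ) - i + 1) (2 * i - 1) * poch ((n : ℚ) - j + 1) (2 * j - 1) /
        ((Nat.factorial (2 * i) : ℚ) * (Nat.factorial (2 * j - 2) : ℚ)) :=
  stmt5_general i j n hi hj
end

section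
/- For all integers t ≥ 1 and k ≥ 1, the following identity holds in ℚ: C(k+t−1, 2t) + ∑_{s=1}^{t} (−1)^{s−1} · C(2s−1, s) / ( (2s−1) · 2^{4s−1} ) · C(k+t−s−1, 2t−2s) = (k − 1/2) · (k − t + 1/2)_{2t−1} / (2t)!. -/
open Finset

/-!
Let `c s` be the Taylor coefficients of `√(1 + x / 4)`. The left-hand side
`E t k = ∑_{s + j = t} c s * C(k - 1 + j, 2 j)` has the odd companion
`O t k = ∑_{s + j = t} c s * C(k + j, 2 j + 1)`, and Pascal's rule couples them:
`E t (k + 1) = E t k + O (t - 1) k` and `O t (k + 1) = O t k + E t (k + 1)`.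
Both sides are values of `F m z = z / (m + 1) * C(z + (m - 1) / 2, m)`, the even sums at
`(2 t - 1, k - 1 / 2)` and the odd ones at `(2 t, k)`, and for `F` Pascal's rule reads
`F (m + 1) (z + 1) = F (m + 1) z + F m (z + 1 / 2)`, which is the same coupled recurrence.
At `k = 1` both sums collapse to `c t`, as do the closed forms, so the two sides agree everywhere.
-/

open Nat

theorem poch_succ_right (a : ℚ) (n : ℕ) : poch a (n + 1) = poch a n * (a + n) :=
  prod_range_succ _ n

theorem poch_succ_left (a : ℚ) (n : ℕ) : poch a (n + 1) = a * poch (a + 1) n := by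
  simp only [poch, prod_range_succ', Nat.cast_add, Nat.cast_one, Nat.cast_zero, add_zero, add_assoc,
    add_comm (1 : ℚ), mul_comm]

structure IsPascalPair {α : Type*} [Add α] (E O : ℕ → ℕ → α) : Prop where
  even_succ : ∀ t k, E t (k + 1) = E t k + O t k
  odd_succ : ∀ t k, O (t + 1) (k + 1) = O (t + 1) k + E t (k + 1)

theorem IsPascalPair.eq_of_boundary {α : Type*} [Add α] {E O E' O' : ℕ → ℕ → α}
    (h : IsPascalPair E O) (h' : IsPascalPair E' O') (hE : ∀ t, E t 0 = E' t 0)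
    (hO : ∀ t, O t 0 = O' t 0) (hO₀ : ∀ k, O 0 k = O' 0 k) (t k : ℕ) :
    E t k = E' t k ∧ O t k = O' t k := by
  induction k generalizing t with
  | zero => exact ⟨hE t, hO t⟩
  | succ k ih =>
    have hE_succ (t : ℕ) : E t (k + 1) = E' t (k + 1) := by
      rw [h.even_succ, h'.even_succ, (ih t).1, (ih t).2]
    refine ⟨hE_succ t, ?_⟩
    cases t with
    | zero => exact hO₀ _
    | succ t => rw [h.odd_succ, h'.odd_succ, (ih _).2, hE_succ]

def closedForm (m : ℕ) (z : ℚ) : ℚ := z * poch (z - (m - 1) / 2) m / (m + 1)!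

theorem closedForm_zero_left (z : ℚ) : closedForm 0 z = z := by
  simp [closedForm, poch]

theorem closedForm_zero_right (m : ℕ) : closedForm m 0 = 0 := by
  simp [closedForm]

theorem closedForm_add_one (m : ℕ) (z : ℚ) :
    closedForm (m + 1) (z + 1) = closedForm (m + 1) z + closedForm m (z + 1 / 2) := by
  simp only [closedForm]
  set w : ℚ := z + 1 / 2 - (m - 1) / 2
  have hL : poch (z + 1 - ((m + 1 : ℕ) - 1 : ℚ) / 2) (m + 1) = poch w m * (w + m) := by
    rw [show z + 1 - ((m + 1 : ℕ) - 1 : ℚ) / 2 = w by push_cast; ring, poch_succ_right]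
  have hR : poch (z - ((m + 1 : ℕ) - 1 : ℚ) / 2) (m + 1) = (w - 1) * poch w m := by
    rw [show z - ((m + 1 : ℕ) - 1 : ℚ) / 2 = w - 1 by push_cast; ring, poch_succ_left,
      sub_add_cancel]
  rw [hL, hR, Nat.factorial_succ (m + 1)]
  push_cast
  field_simp
  ring

def sqrtCoeff : ℕ → ℚ
  | 0 => 1
  | s + 1 => (-1) ^ s * (2 * s + 1).choose (s + 1) / ((2 * s + 1) * 2 ^ (4 * s + 3))

theorem sqrtCoeff_add_two (t : ℕ) :
    sqrtCoeff (t + 2) = -(2 * t + 1) / (8 * (t + 2)) * sqrtCoeff (t + 1) := by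
  have h₁ : ((2 * (t + 1) + 1).choose (t + 1 + 1) : ℚ)
      = (2 * t + 3)! / ((t + 2)! * (t + 1)!) := by
    rw [Nat.cast_choose ℚ (by omega), show 2 * (t + 1) + 1 - (t + 1 + 1) = t + 1 by omega]; rfl
  have h₂ : ((2 * t + 1).choose (t + 1) : ℚ) = (2 * t + 1)! / ((t + 1)! * t !) := by
    rw [Nat.cast_choose ℚ (by omega), show 2 * t + 1 - (t + 1) = t by omega]
  simp only [sqrtCoeff, h₁, h₂, Nat.factorial_succ, pow_succ]
  push_cast
  field_simp
  ring

theorem closedForm_add_two_half (t : ℕ) :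
    closedForm (2 * t + 3) (1 / 2)
      = -(2 * t + 1) / (8 * (t + 2)) * closedForm (2 * t + 1) (1 / 2) := by
  have hpoch : poch (1 / 2 - ((2 * t + 3 : ℕ) - 1 : ℚ) / 2) (2 * t + 3)
      = (-1 / 2 - t)
        * (poch (1 / 2 - ((2 * t + 1 : ℕ) - 1 : ℚ) / 2) (2 * t + 1) * (t + 3 / 2)) := by
    rw [poch_succ_left, poch_succ_right]
    push_cast
    ring_nf
  simp only [closedForm, hpoch, Nat.factorial_succ]
  push_cast
  field_simp
  ring

theorem closedForm_half (t : ℕ) : closedForm (2 * t + 1) (1 / 2) = sqrtCoeff (t + 1) := by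
  induction t with
  | zero => norm_num [closedForm, poch, sqrtCoeff]
  | succ t ih =>
    rw [show 2 * (t + 1) + 1 = 2 * t + 3 by ring, closedForm_add_two_half, ih, sqrtCoeff_add_two]

theorem closedForm_two_mul_one (t : ℕ) : closedForm (2 * t) 1 = sqrtCoeff t := by
  cases t with
  | zero => simp [closedForm, poch, sqrtCoeff]
  | succ t =>
    have h := closedForm_add_one (2 * t + 1) 0
    rw [zero_add, zero_add, closedForm_zero_right, zero_add, closedForm_half] at h
    exact h

theorem isPascalPair_closedForm :
    IsPascalPair (fun t k => closedForm (2 * t + 1) (k + 1 / 2))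
      (fun t k => closedForm (2 * t) (k + 1)) where
  even_succ t k := by
    convert closedForm_add_one (2 * t) (k + 1 / 2) using 2 <;> push_cast <;> ring_nf
  odd_succ t k := by
    convert closedForm_add_one (2 * t + 1) (k + 1) using 2 <;> push_cast <;> ring_nf

def evenSum (t k : ℕ) : ℚ :=
  ∑ p ∈ antidiagonal t, sqrtCoeff p.1 * (k + p.2).choose (2 * p.2)

def oddSum (t k : ℕ) : ℚ :=
  ∑ p ∈ antidiagonal t, sqrtCoeff p.1 * (k + p.2 + 1).choose (2 * p.2 + 1)

theorem isPascalPair_sums : IsPascalPair (fun t k => evenSum (t + 1) k) oddSum where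
  even_succ t k := by
    simp only [evenSum, oddSum, Nat.sum_antidiagonal_succ']
    rw [add_assoc (sqrtCoeff (t + 1) * _), ← sum_add_distrib]
    simp only [mul_zero, Nat.choose_zero_right]
    congr 1
    refine sum_congr rfl fun p _ => ?_
    rw [show k + 1 + (p.2 + 1) = k + (p.2 + 1) + 1 by ring,
      show 2 * (p.2 + 1) = 2 * p.2 + 1 + 1 by ring, Nat.choose_succ_succ',
      show k + (p.2 + 1) = k + p.2 + 1 by ring]
    push_cast
    ring
  odd_succ t k := by
    simp only [evenSum, oddSum, ← sum_add_distrib]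
    refine sum_congr rfl fun p _ => ?_
    rw [show k + 1 + p.2 + 1 = (k + p.2 + 1) + 1 by ring, Nat.choose_succ_succ']
    push_cast
    ring_nf

theorem evenSum_zero_right (t : ℕ) : evenSum t 0 = sqrtCoeff t := by
  rw [evenSum, sum_eq_single_of_mem (t, 0) (by simp)]
  · simp
  · rintro ⟨s, j⟩ hp hne
    have hj : j ≠ 0 := by rintro rfl; simp_all
    rw [Nat.choose_eq_zero_of_lt (by omega), Nat.cast_zero, mul_zero]

theorem oddSum_zero_right (t : ℕ) : oddSum t 0 = sqrtCoeff t := by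
  rw [oddSum, sum_eq_single_of_mem (t, 0) (by simp)]
  · simp
  · rintro ⟨s, j⟩ hp hne
    have hj : j ≠ 0 := by rintro rfl; simp_all
    rw [Nat.choose_eq_zero_of_lt (by omega), Nat.cast_zero, mul_zero]

theorem oddSum_zero_left (k : ℕ) : oddSum 0 k = k + 1 := by
  simp [oddSum, sqrtCoeff]

theorem evenSum_succ_eq_closedForm (t k : ℕ) :
    evenSum (t + 1) k = closedForm (2 * t + 1) (k + 1 / 2) :=
  (isPascalPair_sums.eq_of_boundary isPascalPair_closedForm
    (fun t => by rw [evenSum_zero_right, Nat.cast_zero, zero_add, closedForm_half])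
    (fun t => by rw [oddSum_zero_right, Nat.cast_zero, zero_add, closedForm_two_mul_one])
    (fun k => by rw [oddSum_zero_left, closedForm_zero_left]) t k).1

theorem choose_add_sum_Icc_eq_evenSum (t k : ℕ) (hk : 1 ≤ k) :
    (Nat.choose (k + t - 1) (2 * t) : ℚ) +
      ∑ s ∈ Finset.Icc 1 t,
        (-1 : ℚ) ^ (s - 1) * (Nat.choose (2 * s - 1) s : ℚ) /
            (((2 * s - 1 : ℕ) : ℚ) * 2 ^ (4 * s - 1)) *
          (Nat.choose (k + t - s - 1) (2 * t - 2 * s) : ℚ)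
      = evenSum t (k - 1) := by
  rw [evenSum, Nat.sum_antidiagonal_eq_sum_range_succ_mk, sum_range_succ', add_comm,
    ← Ico_add_one_right_eq_Icc, sum_Ico_eq_sum_range, add_tsub_cancel_right]
  congr 1
  · refine sum_congr rfl fun s hs => ?_
    have hs : s < t := mem_range.mp hs
    rw [show 1 + s - 1 = s by omega, show 2 * (1 + s) - 1 = 2 * s + 1 by omega,
      show 4 * (1 + s) - 1 = 4 * s + 3 by omega,
      show k + t - (1 + s) - 1 = k - 1 + (t - (s + 1)) by omega,
      show 2 * t - 2 * (1 + s) = 2 * (t - (s + 1)) by omega, add_comm 1 s, sqrtCoeff]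
    push_cast
    ring
  · rw [sqrtCoeff, one_mul, Nat.sub_zero, show k + t - 1 = k - 1 + t by omega]

theorem stmt6 (t k : ℕ) (ht : 1 ≤ t) (hk : 1 ≤ k) :
    (Nat.choose (k + t - 1) (2 * t) : ℚ) +
      ∑ s ∈ Finset.Icc 1 t,
        (-1 : ℚ) ^ (s - 1) * (Nat.choose (2 * s - 1) s : ℚ) /
            (((2 * s - 1 : ℕ) : ℚ) * 2 ^ (4 * s - 1)) *
          (Nat.choose (k + t - s - 1) (2 * t - 2 * s) : ℚ)
    = ((k : ℚ) - 1/2) * poch ((k : ℚ) - t + 1/2) (2 * t - 1) /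
        (Nat.factorial (2 * t) : ℚ) := by
  obtain ⟨t, rfl⟩ : ∃ t', t = t' + 1 := ⟨t - 1, by omega⟩
  rw [choose_add_sum_Icc_eq_evenSum _ _ hk, evenSum_succ_eq_closedForm, closedForm,
    Nat.cast_sub hk, show 2 * (t + 1) - 1 = 2 * t + 1 by omega,
    show 2 * t + 1 + 1 = 2 * (t + 1) by ring]
  push_cast
  ring_nf
end
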